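/- Consider the 4-dimensional space H of skew-symmetric 6×6 complex matrices of the form M(a,b,c,d) with rows/columns indexed 1..6: M has block form [[0, B],[−Bᵀ, 0]] where B = [[d,a,b],[−a,d,c],[−b,−c,d]]. Then the Pfaffian of M(a,b,c,d) equals (up to a nonzero constant) d(a²+b²+c²+d²); in particular the locus of rank-≤4 matrices in ℙH is the union of a plane {d=0} and a smooth quadric {a²+b²+c²+d²=0}. -/

import Mathlib

open ExteriorAlgebra

noncomputable section

abbrev V6 := Fin 6 → ℂ

/-- standard basis vectors of ℂ⁶ -/
def e (i : Fin 6) : V6 := Pi.single i 1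

/-- image of basis vectors in the exterior algebra -/
def ev (i : Fin 6) : ExteriorAlgebra ℂ V6 := ExteriorAlgebra.ι ℂ (e i)

/-- the volume element e₀∧e₁∧e₂∧e₃∧e₄∧e₅ -/
def vol : ExteriorAlgebra ℂ V6 := ev 0 * ev 1 * ev 2 * ev 3 * ev 4 * ev 5


/-- The 2-form of the skew matrix M(a,b,c,d) = [[0,B],[−Bᵀ,0]] with
B = [[d,a,b],[−a,d,c],[−b,−c,d]] (basis e₀,…,e₅). -/
def ωM (a b c d : ℂ) : ExteriorAlgebra ℂ V6 :=
  d • (ev 0 * ev 3) + a • (ev 0 * ev 4) + b • (ev 0 * ev 5)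
  - a • (ev 1 * ev 3) + d • (ev 1 * ev 4) + c • (ev 1 * ev 5)
  - b • (ev 2 * ev 3) - c • (ev 2 * ev 4) + d • (ev 2 * ev 5)

/-!
Write `ω = ωM a b c d` as `∑ᵢ eᵢ ∧ xᵢ` (`i = 0, 1, 2`) with `xᵢ = ∑ⱼ Bᵢⱼ e₃₊ⱼ`. The three
2-blades `eᵢ ∧ xᵢ` commute and square to zero, so `ω³ = 6 (e₀ ∧ x₀)(e₁ ∧ x₁)(e₂ ∧ x₂)
= -6 e₀e₁e₂ ∧ x₀x₁x₂ = -6 det B • vol`, and `det B = d(a² + b² + c² + d²)`. Finally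
`vol ≠ 0`, because the determinant, viewed as a linear form on the top exterior power,
is `1` on it.
-/

open scoped IsMulCommutative in
theorem Commute.add_add_pow_three_of_mul_self_eq_zero {R : Type*} [Ring R] {p q r : R}
    (hpq : Commute p q) (hpr : Commute p r) (hqr : Commute q r) (hp : p * p = 0)
    (hq : q * q = 0) (hr : r * r = 0) : (p + q + r) ^ 3 = 6 • (p * q * r) := by
  have : IsMulCommutative (Subring.closure {p, q, r}) := Subring.isMulCommutative_closure <| by
    simp only [Set.mem_insert_iff, Set.mem_singleton_iff]
    rintro x (rfl | rfl | rfl) y (rfl | rfl | rfl) <;> simp only [hpq.eq, hpr.eq, hqr.eq]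
  let P : Subring.closure {p, q, r} := ⟨p, Subring.subset_closure (by simp)⟩
  let Q : Subring.closure {p, q, r} := ⟨q, Subring.subset_closure (by simp)⟩
  let S : Subring.closure {p, q, r} := ⟨r, Subring.subset_closure (by simp)⟩
  have h : (P + Q + S) ^ 3 = 6 • (P * Q * S) := by
    rw [nsmul_eq_mul]
    linear_combination (P + 3 * Q + 3 * S) * (Subtype.ext hp : P * P = 0)
      + (Q + 3 * P + 3 * S) * (Subtype.ext hq : Q * Q = 0)
      + (S + 3 * P + 3 * Q) * (Subtype.ext hr : S * S = 0)
  exact congrArg Subtype.val h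

namespace AlternatingMap

variable {R M N ι : Type*} [CommRing R] [AddCommGroup M] [Module R M] [AddCommGroup N]
  [Module R N] [Fintype ι] [DecidableEq ι]

theorem eq_smulRight_basis_det (e : Module.Basis ι R M) (f : M [⋀^ι]→ₗ[R] N) :
    f = e.det.smulRight (f e) := by
  refine Module.Basis.ext_alternating e fun i h => ?_
  let σ : Equiv.Perm ι := Equiv.ofBijective i (Finite.injective_iff_bijective.1 h)
  change f (e ∘ σ) = e.det.smulRight (f e) (e ∘ σ)
  simp [AlternatingMap.map_perm, Module.Basis.det_self]

theorem map_sum_smul_eq_det_smul (f : M [⋀^ι]→ₗ[R] N) (A : Matrix ι ι R) (v : ι → M) :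
    f (fun i => ∑ j, A i j • v j) = A.det • f v := by
  let g := f.compLinearMap (Fintype.linearCombination R v)
  calc f (fun i => ∑ j, A i j • v j) = g (fun i => A i) := by
        simp [g, Fintype.linearCombination_apply]
    _ = A.det • g (Pi.basisFun R ι) := by
        conv_lhs => rw [eq_smulRight_basis_det (Pi.basisFun R ι) g]
        rw [smulRight_apply, Pi.basisFun_det_apply]
        rfl
    _ = A.det • f v := by simp [g]

end AlternatingMap

namespace ExteriorAlgebra

variable {R M : Type*} [CommRing R] [AddCommGroup M] [Module R M]

theorem ι_mul_ι_anticomm (x y : M) : ι R x * ι R y = -(ι R y * ι R x) :=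
  eq_neg_of_add_eq_zero_left (ι_add_mul_swap x y)

theorem ι_mul_ι_mul_anticomm (x y : M) (z : ExteriorAlgebra R M) :
    ι R x * (ι R y * z) = -(ι R y * (ι R x * z)) := by
  rw [← mul_assoc, ι_mul_ι_anticomm, neg_mul, mul_assoc]

theorem commute_ι_mul_ι_ι (x y z : M) : Commute (ι R x * ι R y) (ι R z) := by
  rw [Commute, SemiconjBy, mul_assoc, ι_mul_ι_anticomm y z, mul_neg, ι_mul_ι_mul_anticomm,
    neg_neg, ← mul_assoc]

theorem commute_ι_mul_ι (x y z w : M) : Commute (ι R x * ι R y) (ι R z * ι R w) :=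
  (commute_ι_mul_ι_ι x y z).mul_right (commute_ι_mul_ι_ι x y w)

theorem ι_mul_ι_mul_self (x y : M) : ι R x * ι R y * (ι R x * ι R y) = 0 := by
  rw [mul_assoc, ← (commute_ι_mul_ι_ι x y y).eq, ← mul_assoc, ← mul_assoc, ι_sq_zero, zero_mul,
    zero_mul]

theorem ι_mul_ι_mul_ι_mul_ι_mul_ι_mul_ι (u₀ x₀ u₁ x₁ u₂ x₂ : M) :
    ι R u₀ * ι R x₀ * (ι R u₁ * ι R x₁) * (ι R u₂ * ι R x₂) =
      -(ι R u₀ * ι R u₁ * ι R u₂ * (ι R x₀ * ι R x₁ * ι R x₂)) := by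
  simp only [mul_assoc]
  rw [ι_mul_ι_mul_anticomm x₀ u₁, ι_mul_ι_mul_anticomm x₁ u₂]
  simp only [mul_neg]
  rw [ι_mul_ι_mul_anticomm x₀ u₂]
  simp only [mul_neg, neg_neg]

theorem ιMulti_basisFun_ne_zero [Nontrivial R] (n : ℕ) :
    ιMulti R n (Pi.basisFun R (Fin n)) ≠ 0 := by
  intro h
  have := congrArg (liftAlternating (R := R) (M := Fin n → R) (N := R)
    (Pi.single (M := fun i => (Fin n → R) [⋀^Fin i]→ₗ[R] R) n Matrix.detRowAlternating)) h
  rw [liftAlternating_apply_ιMulti, map_zero, Pi.single_eq_same, ← Pi.basisFun_det,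
    Module.Basis.det_self] at this
  exact one_ne_zero this

end ExteriorAlgebra

def typeTwoBlock (a b c d : ℂ) : Matrix (Fin 3) (Fin 3) ℂ := !![d, a, b; -a, d, c; -b, -c, d]

theorem det_typeTwoBlock (a b c d : ℂ) :
    (typeTwoBlock a b c d).det = d * (a ^ 2 + b ^ 2 + c ^ 2 + d ^ 2) := by
  simp only [typeTwoBlock, Matrix.det_fin_three, Matrix.of_apply, Matrix.cons_val',
    Matrix.cons_val_zero, Matrix.cons_val_fin_one, Matrix.cons_val_one, Matrix.cons_val]
  ring

def typeTwoRow (a b c d : ℂ) (i : Fin 3) : V6 :=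
  ∑ j, typeTwoBlock a b c d i j • e (Fin.natAdd 3 j)

theorem ωM_eq_ι_mul_ι_typeTwoRow (a b c d : ℂ) :
    ωM a b c d = ι ℂ (e 0) * ι ℂ (typeTwoRow a b c d 0)
      + ι ℂ (e 1) * ι ℂ (typeTwoRow a b c d 1) + ι ℂ (e 2) * ι ℂ (typeTwoRow a b c d 2) := by
  simp only [ωM, ev, typeTwoRow, typeTwoBlock, Matrix.of_apply, Matrix.cons_val',
    Matrix.cons_val_fin_one, Matrix.cons_val_zero, Fin.natAdd_eq_addNat, Fin.sum_univ_three,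
    Fin.reduceAddNat, Matrix.cons_val_one, Matrix.cons_val, map_add, map_smul, mul_add,
    Algebra.mul_smul_comm, neg_smul, map_neg, mul_neg]
  abel

theorem ι_typeTwoRow_mul (a b c d : ℂ) :
    ι ℂ (typeTwoRow a b c d 0) * ι ℂ (typeTwoRow a b c d 1) * ι ℂ (typeTwoRow a b c d 2)
      = (d * (a ^ 2 + b ^ 2 + c ^ 2 + d ^ 2)) • (ev 3 * ev 4 * ev 5) := by
  have h := (ιMulti ℂ 3).map_sum_smul_eq_det_smul (typeTwoBlock a b c d)
    (fun j => e (Fin.natAdd 3 j))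
  simp only [det_typeTwoBlock, ιMulti_apply, List.ofFn_succ, List.ofFn_zero, List.prod_cons,
    List.prod_nil, mul_one, ← mul_assoc] at h
  exact h

theorem vol_ne_zero : vol ≠ 0 := by
  convert ιMulti_basisFun_ne_zero (R := ℂ) 6
  simp only [ιMulti_apply, List.ofFn_succ, List.ofFn_zero, List.prod_cons, List.prod_nil, mul_one,
    ← mul_assoc, Pi.basisFun_apply]
  rfl

theorem ωM_cube (a b c d : ℂ) :
    ωM a b c d * ωM a b c d * ωM a b c d
      = (-6 * (d * (a ^ 2 + b ^ 2 + c ^ 2 + d ^ 2))) • vol := by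
  rw [← pow_three', ωM_eq_ι_mul_ι_typeTwoRow,
    Commute.add_add_pow_three_of_mul_self_eq_zero (commute_ι_mul_ι ..) (commute_ι_mul_ι ..)
      (commute_ι_mul_ι ..) (ι_mul_ι_mul_self ..) (ι_mul_ι_mul_self ..) (ι_mul_ι_mul_self ..),
    ι_mul_ι_mul_ι_mul_ι_mul_ι_mul_ι, ι_typeTwoRow_mul]
  simp only [vol, ev, mul_smul_comm, ← mul_assoc]
  module

/-- The Pfaffian of M(a,b,c,d) equals, up to a fixed nonzero constant,
d(a²+b²+c²+d²); in particular M(a,b,c,d) has rank ≤ 4 (i.e. ω³ = 0) exactly when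
d = 0 or a²+b²+c²+d² = 0, so the rank ≤ 4 locus in ℙH is the union of the plane
{d = 0} and the smooth quadric {a²+b²+c²+d² = 0}. -/
theorem type_two_pfaffian :
    (∃ k : ℂ, k ≠ 0 ∧ ∀ a b c d : ℂ,
      ωM a b c d * ωM a b c d * ωM a b c d
        = (k * (d * (a^2 + b^2 + c^2 + d^2))) • vol) ∧
    (∀ a b c d : ℂ,
      ωM a b c d * ωM a b c d * ωM a b c d = 0 ↔
        d = 0 ∨ a^2 + b^2 + c^2 + d^2 = 0) := by
  refine ⟨⟨-6, by norm_num, ωM_cube⟩, fun a b c d => ?_⟩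
  rw [ωM_cube, smul_eq_zero, or_iff_left vol_ne_zero, mul_eq_zero, mul_eq_zero]
  norm_num
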